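/- Let m = s + t with s = t - 1 (or s = t - 2), let γ be a primitive element of F_{2^t}, π: F_{2^t} → F_2^t a linear isomorphism, and for i = 1,...,t define f_i(y,x) = π(γ^{[y]+i})·x where [y] is the integer represented by y ∈ F_2^s. Then for every nonzero c ∈ F_2^t, the function f_c = c_1 f_1 + ... + c_t f_t satisfies W_{f_c}(β,α) ∈ {0, ±2^t} for all (β,α); i.e., F = (f_1,...,f_t) is a vectorial plateaued function with amplitude 2^t. -/

import Mathlib

open Finset

/-- mod-2 inner product on `F_2^n`. -/
def dotp {n : ℕ} (a b : Fin n → ZMod 2) : ZMod 2 := ∑ i, a i * b i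

/-- `(-1)^v` for `v ∈ F_2`. -/
def sgn (v : ZMod 2) : ℤ := (-1 : ℤ) ^ v.val

/-- Walsh transform of a function on the product domain F_2^s × F_2^t. -/
def walshP {s t : ℕ} (f : (Fin s → ZMod 2) × (Fin t → ZMod 2) → ZMod 2)
    (β : Fin s → ZMod 2) (α : Fin t → ZMod 2) : ℤ :=
  ∑ p : (Fin s → ZMod 2) × (Fin t → ZMod 2), sgn (f p + dotp β p.1 + dotp α p.2)

/-- Integer inner product of the ±1-sequences of two Boolean functions on F_2^s × F_2^t. -/
def seqInnerP {s t : ℕ} (f g : (Fin s → ZMod 2) × (Fin t → ZMod 2) → ZMod 2) : ℤ :=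
  ∑ p : (Fin s → ZMod 2) × (Fin t → ZMod 2), sgn (f p) * sgn (g p)

/-- the integer `[y]` represented by the binary vector `y ∈ F_2^s`. -/
def intRep {s : ℕ} (y : Fin s → ZMod 2) : ℕ := ∑ j : Fin s, (y j).val * 2 ^ (j : ℕ)

/-!
Since `π` is linear, `f_c(y, x) = π(γ^{[y]+1} P)·x` with `P = ∑ cᵢ γ^{i-1}`, and `P ≠ 0`
because `1, γ, …, γ^{t-1}` is a basis of `F_{2^t}` over `F_2`. So `f_c` is a
Maiorana–McFarland function `u(y)·x`, whose Walsh transform at `(β, α)` is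
`2^t ∑_{u(y) = α} (-1)^{β·y}`. As `[y] < 2^s ≤ 2^t - 1`, the order of `γ`, the map `u` is
injective, so that sum has at most one term.
-/

lemma dotp_eq_dotProduct {n : ℕ} (a b : Fin n → ZMod 2) : dotp a b = a ⬝ᵥ b := rfl

lemma sgn_add (a b : ZMod 2) : sgn (a + b) = sgn a * sgn b := by
  revert a b; decide

lemma sgn_eq_one_or_eq_neg_one (a : ZMod 2) : sgn a = 1 ∨ sgn a = -1 := by
  revert a; decide

def dotpChar {n : ℕ} (v : Fin n → ZMod 2) : AddChar (Fin n → ZMod 2) ℤ where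
  toFun x := sgn (dotp v x)
  map_zero_eq_one' := by simp [dotp_eq_dotProduct, sgn]
  map_add_eq_mul' x y := by rw [dotp_eq_dotProduct, dotProduct_add, sgn_add]; rfl

lemma sum_sgn_dotp {n : ℕ} (v : Fin n → ZMod 2) :
    ∑ x : Fin n → ZMod 2, sgn (dotp v x) = if v = 0 then 2 ^ n else 0 := by
  split_ifs with hv
  · simp [hv, dotp_eq_dotProduct, sgn]
  · obtain ⟨i, hi⟩ := Function.ne_iff.1 hv
    have hψ : dotpChar v ≠ 1 := by
      refine AddChar.ne_one_iff.2 ⟨Pi.single i 1, ?_⟩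
      have hvi : v i = 1 := (by decide : ∀ a : ZMod 2, a ≠ 0 → a = 1) _ hi
      change sgn (v ⬝ᵥ Pi.single i 1) ≠ 1
      rw [dotProduct_single, hvi]
      decide
    exact AddChar.sum_eq_zero_of_ne_one hψ

lemma walshP_maioranaMcFarland {s t : ℕ} (u : (Fin s → ZMod 2) → (Fin t → ZMod 2))
    (β : Fin s → ZMod 2) (α : Fin t → ZMod 2) :
    walshP (fun p => dotp (u p.1) p.2) β α =
      2 ^ t * ∑ y ∈ univ.filter (fun y => u y = α), sgn (dotp β y) := by
  classical
  have hinner (y : Fin s → ZMod 2) :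
      ∑ x : Fin t → ZMod 2, sgn (dotp (u y) x + dotp β y + dotp α x) =
        if u y = α then 2 ^ t * sgn (dotp β y) else 0 := by
    have hsplit (x : Fin t → ZMod 2) : sgn (dotp (u y) x + dotp β y + dotp α x) =
        sgn (dotp β y) * sgn (dotp (u y + α) x) := by
      rw [← sgn_add]
      congr 1
      simp only [dotp_eq_dotProduct, add_dotProduct]
      ring
    simp_rw [hsplit, ← mul_sum, sum_sgn_dotp]
    simp only [add_eq_zero_iff_eq_neg, ZModModule.neg_eq_self]
    split_ifs <;> ring
  rw [walshP, Fintype.sum_prod_type, mul_sum, sum_filter]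
  exact sum_congr rfl fun y _ => hinner y

lemma walshP_maioranaMcFarland_mem_of_injective {s t : ℕ}
    {u : (Fin s → ZMod 2) → (Fin t → ZMod 2)} (hu : Function.Injective u)
    (β : Fin s → ZMod 2) (α : Fin t → ZMod 2) :
    walshP (fun p => dotp (u p.1) p.2) β α ∈ ({0, 2 ^ t, -(2 ^ t)} : Set ℤ) := by
  classical
  rw [walshP_maioranaMcFarland]
  by_cases hα : ∃ y₀, u y₀ = α
  · obtain ⟨y₀, rfl⟩ := hα
    simp only [hu.eq_iff, filter_eq', mem_univ, if_true, sum_singleton]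
    rcases sgn_eq_one_or_eq_neg_one (dotp β y₀) with h | h <;> simp [h]
  · push Not at hα
    simp [hα]

lemma intRep_succ {s : ℕ} (y : Fin (s + 1) → ZMod 2) :
    intRep y = (y 0).val + 2 * intRep (fun j : Fin s => y j.succ) := by
  simp only [intRep, Fin.sum_univ_succ, mul_sum, Fin.val_zero, pow_zero, mul_one,
    Fin.val_succ, pow_succ]
  congr 1
  exact sum_congr rfl fun j _ => by ring

lemma intRep_lt {s : ℕ} (y : Fin s → ZMod 2) : intRep y < 2 ^ s := by
  induction s with
  | zero => simp [intRep]
  | succ s ih =>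
    rw [intRep_succ, pow_succ]
    have := ih (fun j => y j.succ)
    have := ZMod.val_lt (y 0)
    omega

lemma intRep_injective {s : ℕ} : Function.Injective (intRep (s := s)) := by
  induction s with
  | zero => exact Function.injective_of_subsingleton _
  | succ s ih =>
    intro a b hab
    rw [intRep_succ, intRep_succ] at hab
    have := ZMod.val_lt (a 0)
    have := ZMod.val_lt (b 0)
    have h0 : a 0 = b 0 := ZMod.val_injective _ (by omega)
    have htail : (fun j : Fin s => a j.succ) = fun j => b j.succ := ih (by omega)
    funext j
    cases j using Fin.cases with
    | zero => exact h0
    | succ k => exact congrFun htail k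

section PrimitiveElement

variable {K : Type*} [Field K] {γ : K}

lemma ne_zero_of_forall_pow_eq [Finite K] (hK : 2 < Nat.card K)
    (hγ : ∀ z : K, z ≠ 0 → ∃ n : ℕ, γ ^ n = z) : γ ≠ 0 := by
  classical
  have := Fintype.ofFinite K
  rintro rfl
  have hsub : (univ : Finset K) ⊆ {0, 1} := fun z _ => by
    rcases eq_or_ne z 0 with rfl | hz
    · simp
    · obtain ⟨n, rfl⟩ := hγ z hz
      rcases n with _ | n <;> simp
  have := card_le_card hsub
  rw [card_univ, ← Nat.card_eq_fintype_card] at this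
  have := card_le_two (a := (0 : K)) (b := 1)
  omega

lemma orderOf_eq_card_sub_one_of_forall_pow_eq [Finite K] (hγ0 : γ ≠ 0)
    (hγ : ∀ z : K, z ≠ 0 → ∃ n : ℕ, γ ^ n = z) : orderOf γ = Nat.card K - 1 := by
  rw [← Nat.card_units, ← Units.val_mk0 hγ0, orderOf_units]
  refine orderOf_eq_card_of_forall_mem_zpowers fun g => ?_
  obtain ⟨n, hn⟩ := hγ g g.ne_zero
  rw [show g = Units.mk0 γ hγ0 ^ n from Units.ext (by simp [hn])]
  exact Subgroup.npow_mem_zpowers _ n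

lemma pow_intRep_succ_mul_injective [Finite K] {s : ℕ} (hs : 2 ^ s < Nat.card K)
    (hγ : ∀ z : K, z ≠ 0 → ∃ n : ℕ, γ ^ n = z) {P : K} (hP : P ≠ 0) :
    Function.Injective fun y : Fin s → ZMod 2 => γ ^ (intRep y + 1) * P := by
  rcases Nat.eq_zero_or_pos s with rfl | hs0
  · exact Function.injective_of_subsingleton _
  have hγ0 : γ ≠ 0 :=
    ne_zero_of_forall_pow_eq (lt_of_le_of_lt (Nat.le_self_pow hs0.ne' 2) hs) hγ
  have hord := orderOf_eq_card_sub_one_of_forall_pow_eq hγ0 hγ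
  intro a b hab
  have hpow : γ ^ intRep a = γ ^ intRep b :=
    mul_right_cancel₀ (mul_ne_zero hγ0 hP) (by simpa only [pow_succ, mul_assoc] using hab)
  have ha := intRep_lt a
  have hb := intRep_lt b
  exact intRep_injective <| pow_injOn_Iio_orderOf (by simp only [Set.mem_Iio]; omega)
    (by simp only [Set.mem_Iio]; omega) hpow

lemma linearIndependent_pow_of_forall_pow_eq {F : Type*} [Field F] [Algebra F K]
    [FiniteDimensional F K] (hγ : ∀ z : K, z ≠ 0 → ∃ n : ℕ, γ ^ n = z) :
    LinearIndependent F fun i : Fin (Module.finrank F K) => γ ^ (i : ℕ) := by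
  have hadj : IntermediateField.adjoin F {γ} = ⊤ := by
    refine eq_top_iff.2 fun z _ => ?_
    rcases eq_or_ne z 0 with rfl | hz
    · exact zero_mem _
    · obtain ⟨n, rfl⟩ := hγ z hz
      exact pow_mem (IntermediateField.mem_adjoin_simple_self F γ) n
  have hdeg : (minpoly F γ).natDegree = Module.finrank F K := by
    rw [← IntermediateField.adjoin.finrank (IsIntegral.of_finite F γ), hadj,
      IntermediateField.finrank_top']
  exact hdeg ▸ linearIndependent_pow γ

end PrimitiveElement

theorem stmt_5_general {s t : ℕ} (hst : s + 1 = t ∨ s + 2 = t)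
    (γ : GaloisField 2 t) (hγ : ∀ z : GaloisField 2 t, z ≠ 0 → ∃ n : ℕ, γ ^ n = z)
    (π : GaloisField 2 t ≃ₗ[ZMod 2] (Fin t → ZMod 2))
    (c : Fin t → ZMod 2) (hc : c ≠ 0)
    (β : Fin s → ZMod 2) (α : Fin t → ZMod 2) :
    walshP (fun p : (Fin s → ZMod 2) × (Fin t → ZMod 2) =>
        ∑ i : Fin t, c i * dotp (π (γ ^ (intRep p.1 + (i : ℕ) + 1))) p.2) β α ∈
      ({0, 2 ^ t, -(2 ^ t)} : Set ℤ) := by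
  have ht : t ≠ 0 := by omega
  let P : GaloisField 2 t := ∑ i : Fin t, c i • γ ^ (i : ℕ)
  have hlin : LinearIndependent (ZMod 2) fun i : Fin t => γ ^ (i : ℕ) := by
    have := linearIndependent_pow_of_forall_pow_eq (F := ZMod 2) hγ
    rwa [GaloisField.finrank 2 ht] at this
  have hP : P ≠ 0 := fun h => hc (funext (Fintype.linearIndependent_iff.1 hlin c h))
  have hf : (fun p : (Fin s → ZMod 2) × (Fin t → ZMod 2) =>
      ∑ i : Fin t, c i * dotp (π (γ ^ (intRep p.1 + (i : ℕ) + 1))) p.2) =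
      fun p => dotp (π (γ ^ (intRep p.1 + 1) * P)) p.2 := by
    funext p
    rw [dotp_eq_dotProduct, mul_sum, map_sum, sum_dotProduct]
    refine sum_congr rfl fun i _ => ?_
    rw [mul_smul_comm, map_smul, smul_dotProduct, smul_eq_mul, ← pow_add, add_right_comm]
    rfl
  have hs : 2 ^ s < Nat.card (GaloisField 2 t) := by
    rw [GaloisField.card 2 t ht]
    exact Nat.pow_lt_pow_right (by norm_num) (by omega)
  rw [hf]
  exact walshP_maioranaMcFarland_mem_of_injective
    (π.injective.comp (pow_intRep_succ_mul_injective hs hγ hP)) β α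

/-- for the Maiorana-McFarland functions
f_i(y,x) = π(γ^{[y]+i})·x (i = 1,…,t) of Construction 1, with γ primitive in
F_{2^t} and π a linear isomorphism, every nonzero linear combination
f_c = c_1 f_1 + … + c_t f_t is plateaued with spectrum ⊆ {0, ±2^t}. -/
theorem stmt_5 {m s t : ℕ} (hm : m = s + t) (hst : s + 1 = t ∨ s + 2 = t)
    (γ : GaloisField 2 t) (hγ : ∀ z : GaloisField 2 t, z ≠ 0 → ∃ n : ℕ, γ ^ n = z)
    (π : GaloisField 2 t ≃ₗ[ZMod 2] (Fin t → ZMod 2))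
    (c : Fin t → ZMod 2) (hc : c ≠ 0)
    (β : Fin s → ZMod 2) (α : Fin t → ZMod 2) :
    walshP (fun p : (Fin s → ZMod 2) × (Fin t → ZMod 2) =>
        ∑ i : Fin t, c i * dotp (π (γ ^ (intRep p.1 + (i : ℕ) + 1))) p.2) β α ∈
      ({0, 2 ^ t, -(2 ^ t)} : Set ℤ) :=
  stmt_5_general hst γ hγ π c hc β α
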